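/- arXiv:1205.1269 — 2 statements merged into one kernel-verified Lean document; each statement's English description precedes it below -/
import Mathlib

section
/- Let h : ℝ² → ℝ be a bounded C² function, let ε₀ > 0, and let g ∈ L²(ℝ²) with g(x) ≥ 0 for almost every x. If Δh(x) + ε₀ g(x) ≤ 0 for almost every x ∈ ℝ², then g = 0 almost everywhere (and h is constant). -/
/-!
In dimension two, `z ↦ log ‖z - p‖` is harmonic away from `p`. So if `Δf ≤ 0` and `f ≥ m`, then
on the annulus `r < ‖z - p‖ < R` the function `-f - β log ‖z - p‖` is subharmonic, and the weak
maximum principle bounds it by its values on the two boundary circles. Choosing `r` so small that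
`f ≥ f p - ε` on the inner circle, then `β` so small that `β log (‖x - p‖ / r) ≤ ε`, and finally
`R` so large that `β log (R / r) ≥ f p - m`, yields `f p ≤ f x + 2ε`. Hence a superharmonic
function on the plane that is bounded below is constant. For `h`, the Laplacian is `≤ -ε₀ g ≤ 0`
almost everywhere, hence everywhere by continuity; so `h` is constant, `Δh = 0`, and `ε₀ g ≤ 0`.
-/

open MeasureTheory Filter Topology Real

noncomputable section

/-- The plane `ℝ²`. -/
abbrev E2 : Type := EuclideanSpace ℝ (Fin 2)
/-- The target space `ℝ³`. -/
abbrev E3 : Type := EuclideanSpace ℝ (Fin 3)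

/-- Partial derivative `∂ᵢ f` of a scalar function on `ℝ²`. -/
def pd (i : Fin 2) (f : E2 → ℝ) (x : E2) : ℝ := fderiv ℝ f x (EuclideanSpace.single i 1)

/-- Laplacian of a scalar function on `ℝ²`. -/
def lap (f : E2 → ℝ) (x : E2) : ℝ := ∑ i : Fin 2, pd i (pd i f) x

/-- `|∇d|² = Σ_{i,j} (∂_i d_j)²` for a map `d : ℝ² → ℝ³`. -/
def gradSq (d : E2 → E3) (x : E2) : ℝ :=
  ∑ i : Fin 2, ∑ j : Fin 3, (pd i (fun y => d y j) x) ^ 2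

/-- The north pole `e₃ = (0,0,1) ∈ 𝕊²`. -/
def e3 : E3 := EuclideanSpace.single 2 1

open InnerProductSpace Module Laplacian Metric

theorem IsLocalMax.nonpos_of_hasDerivAt_hasDerivAt {f f' : ℝ → ℝ} {a c : ℝ} (hmax : IsLocalMax f a)
    (hf : ∀ᶠ t in 𝓝 a, HasDerivAt f (f' t) t) (hf' : HasDerivAt f' c a) : c ≤ 0 := by
  by_contra! hc
  -- `g` still has a positive second derivative at `a`, so `a` is also a local minimum of `g`;
  -- against the local maximum of `f` this forces `(t - a) ^ 2 ≤ 0` near `a`.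
  set g : ℝ → ℝ := fun t => f t - c / 4 * (t - a) ^ 2
  have hq : ∀ t, HasDerivAt (fun t => c / 4 * (t - a) ^ 2) (c / 2 * (t - a)) t := fun t =>
    ((((hasDerivAt_id t).sub_const a).pow 2).const_mul (c / 4)).congr_deriv (by simp; ring)
  have hg : ∀ᶠ t in 𝓝 a, HasDerivAt g (f' t - c / 2 * (t - a)) t := by
    filter_upwards [hf] with t ht
    exact ht.sub (hq t)
  have hg' : HasDerivAt (fun t => f' t - c / 2 * (t - a)) (c / 2) a :=
    (hf'.sub (((hasDerivAt_id a).sub_const a).const_mul (c / 2))).congr_deriv (by ring)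
  have hmin : IsLocalMin g a := by
    refine isLocalMin_of_deriv_deriv_pos ?_ ?_ hg.self_of_nhds.continuousAt
    · have hdg : deriv g =ᶠ[𝓝 a] fun t => f' t - c / 2 * (t - a) := hg.mono fun t ht => ht.deriv
      rw [hdg.deriv_eq, hg'.deriv]
      linarith
    · rw [hg.self_of_nhds.deriv, hmax.hasDerivAt_eq_zero hf.self_of_nhds]
      simp
  have hsq : ∀ᶠ t in 𝓝 a, c / 4 * (t - a) ^ 2 ≤ 0 := by
    filter_upwards [hmin, hmax] with t hmin hmax
    simp only [g, sub_self, ne_eq, OfNat.ofNat_ne_zero, not_false_eq_true, zero_pow,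
      mul_zero, sub_zero] at hmin
    linarith
  obtain ⟨t, ht, hta⟩ :=
    ((hsq.filter_mono nhdsWithin_le_nhds).and (self_mem_nhdsWithin (s := Set.Ioi a))).exists
  have : 0 < c / 4 * (t - a) ^ 2 := by have : 0 < t - a := sub_pos.2 hta; positivity
  linarith

theorem IsLocalMax.iteratedFDeriv_two_nonpos {E : Type*} [NormedAddCommGroup E]
    [NormedSpace ℝ E] {f : E → ℝ} {x : E} (hmax : IsLocalMax f x) (hf : ContDiffAt ℝ 2 f x)
    (v : E) : iteratedFDeriv ℝ 2 f x ![v, v] ≤ 0 := by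
  set ℓ : ℝ → E := fun t => x + t • v
  have hℓ : ∀ t, HasDerivAt ℓ v t := fun t =>
    (((hasDerivAt_id t).smul_const v).const_add x).congr_deriv (one_smul ℝ v)
  have hℓ0 : ℓ 0 = x := by simp [ℓ]
  have hℓx : Tendsto ℓ (𝓝 0) (𝓝 x) := hℓ0 ▸ (hℓ 0).continuousAt.tendsto
  have hdiff : ∀ᶠ t in 𝓝 0, HasDerivAt (f ∘ ℓ) (fderiv ℝ f (ℓ t) v) t := by
    filter_upwards [hℓx.eventually (hf.eventually (by simp))] with t ht
    exact (ht.differentiableAt (by simp)).hasFDerivAt.comp_hasDerivAt t (hℓ t)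
  have hdiff2 : HasDerivAt (fun t => fderiv ℝ f (ℓ t) v) (fderiv ℝ (fderiv ℝ f) x v v) 0 := by
    have hD : DifferentiableAt ℝ (fderiv ℝ f) x :=
      (hf.fderiv_right (m := 1) le_rfl).differentiableAt one_ne_zero
    rw [← hℓ0] at hD
    simpa [hℓ0] using (hD.hasFDerivAt.comp_hasDerivAt 0 (hℓ 0)).clm_apply (hasDerivAt_const 0 v)
  rw [iteratedFDeriv_two_apply]
  exact (hℓ0 ▸ hmax : IsLocalMax f (ℓ 0)).comp_continuous (hℓ 0).continuousAt
    |>.nonpos_of_hasDerivAt_hasDerivAt hdiff hdiff2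

section Laplacian

variable {E F G : Type*} [NormedAddCommGroup E] [InnerProductSpace ℝ E] [FiniteDimensional ℝ E]

theorem IsLocalMax.laplacian_nonpos {f : E → ℝ} {x : E} (hmax : IsLocalMax f x)
    (hf : ContDiffAt ℝ 2 f x) : Δ f x ≤ 0 := by
  rw [laplacian_eq_iteratedFDeriv_stdOrthonormalBasis]
  exact Finset.sum_nonpos fun i _ => hmax.iteratedFDeriv_two_nonpos hf _

theorem ContDiff.continuous_laplacian {f : E → ℝ} (hf : ContDiff ℝ 2 f) : Continuous (Δ f) := by
  rw [laplacian_eq_iteratedFDeriv_stdOrthonormalBasis]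
  have := hf.continuous_iteratedFDeriv (m := 2) le_rfl
  fun_prop

theorem laplacian_norm_sq (x : E) : Δ (fun z : E => ‖z‖ ^ 2) x = 2 * finrank ℝ E := by
  have hD : fderiv ℝ (fderiv ℝ fun z : E => ‖z‖ ^ 2) x = 2 • innerSL ℝ := by
    rw [fderiv_norm_sq, ← FunLike.coe_smul, ContinuousLinearMap.fderiv]
  simp only [laplacian_eq_iteratedFDeriv_stdOrthonormalBasis, iteratedFDeriv_two_apply, hD]
  calc _ = ∑ i : Fin (finrank ℝ E), (2 : ℝ) := Finset.sum_congr rfl fun i _ => by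
        rw [smul_apply, smul_apply, innerSL_apply_apply]
        simp
    _ = _ := by simp [mul_comm]

variable [NormedAddCommGroup F] [InnerProductSpace ℝ F] [FiniteDimensional ℝ F]
  [NormedAddCommGroup G] [NormedSpace ℝ G]

theorem laplacian_comp_linearIsometryEquiv (e : E ≃ₗᵢ[ℝ] F) (f : F → G) (x : E) :
    Δ (f ∘ e) x = Δ f (e x) := by
  have hcomp : iteratedFDeriv ℝ 2 (f ∘ e) x =
      (iteratedFDeriv ℝ 2 f (e x)).compContinuousLinearMap fun _ => (e : E →L[ℝ] F) := by
    simpa [iteratedFDerivWithin_univ] using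
      e.toContinuousLinearEquiv.iteratedFDerivWithin_comp_right f uniqueDiffOn_univ
        (Set.mem_univ _) 2
  rw [laplacian_eq_iteratedFDeriv_orthonormalBasis _ (stdOrthonormalBasis ℝ E),
    laplacian_eq_iteratedFDeriv_orthonormalBasis _ ((stdOrthonormalBasis ℝ E).map e)]
  simp only [hcomp, ContinuousMultilinearMap.compContinuousLinearMap_apply,
    OrthonormalBasis.map_apply]
  refine Finset.sum_congr rfl fun i _ => congrArg _ ?_
  ext j
  fin_cases j <;> rfl

theorem InnerProductSpace.HarmonicAt.comp_linearIsometryEquiv {f : F → G} {x : E}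
    (e : E ≃ₗᵢ[ℝ] F) (hf : HarmonicAt f (e x)) : HarmonicAt (f ∘ e) x := by
  refine ⟨hf.1.comp x e.contDiff.contDiffAt, ?_⟩
  filter_upwards [(e.continuous.tendsto x).eventually hf.2] with y hy
  rw [laplacian_comp_linearIsometryEquiv]
  exact hy

theorem harmonicAt_log_norm_sub (hE : finrank ℝ E = 2) {p z : E} (hz : z ≠ p) :
    HarmonicAt (fun y => log ‖y - p‖) z := by
  let e : ℂ ≃ₗᵢ[ℝ] E :=
    Complex.isometryOfOrthonormal ((stdOrthonormalBasis ℝ E).reindex (finCongr hE))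
  have hℂ : HarmonicAt (fun w : ℂ => log ‖w - e.symm p‖) (e.symm z) :=
    (analyticAt_id.sub analyticAt_const).harmonicAt_log_norm
      (sub_ne_zero.2 (e.symm.injective.ne hz))
  have he : (fun w : ℂ => log ‖w - e.symm p‖) ∘ e.symm = fun y => log ‖y - p‖ := by
    ext y
    rw [Function.comp_apply, ← map_sub, LinearIsometryEquiv.norm_map]
  simpa [he] using hℂ.comp_linearIsometryEquiv e.symm

end Laplacian

section MaximumPrinciple

variable {E : Type*} [NormedAddCommGroup E] [InnerProductSpace ℝ E] [FiniteDimensional ℝ E]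
  {U : Set E} {W : E → ℝ} {B : ℝ} {y : E}

theorem le_of_frontier_le_of_laplacian_pos (hU : IsOpen U) (hb : Bornology.IsBounded U)
    (hc : ContinuousOn W (closure U)) (hW : ∀ y ∈ U, ContDiffAt ℝ 2 W y)
    (hΔ : ∀ y ∈ U, 0 < Δ W y) (hB : ∀ y ∈ frontier U, W y ≤ B) (hy : y ∈ closure U) :
    W y ≤ B := by
  obtain ⟨z, hz, hmax⟩ := hb.isCompact_closure.exists_isMaxOn ⟨y, hy⟩ hc
  have hzU : z ∉ U := fun hzU =>
    (hΔ z hzU).not_ge <| (hmax.isLocalMax <| mem_of_superset (hU.mem_nhds hzU) subset_closure)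
      |>.laplacian_nonpos (hW z hzU)
  exact (hmax hy).trans (hB z ⟨hz, by rwa [hU.interior_eq]⟩)

theorem le_of_frontier_le_of_laplacian_nonneg [Nontrivial E] (hU : IsOpen U)
    (hb : Bornology.IsBounded U) (hc : ContinuousOn W (closure U))
    (hW : ∀ y ∈ U, ContDiffAt ℝ 2 W y) (hΔ : ∀ y ∈ U, 0 ≤ Δ W y)
    (hB : ∀ y ∈ frontier U, W y ≤ B) (hy : y ∈ closure U) : W y ≤ B := by
  obtain ⟨R, hR⟩ := hb.closure.subset_closedBall 0
  refine le_of_forall_pos_le_add fun ε hε => ?_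
  set η := ε / (R ^ 2 + 1)
  have hη : 0 < η := by positivity
  have hηR : ∀ z ∈ closure U, η * ‖z‖ ^ 2 ≤ ε := fun z hz => by
    have : ‖z‖ ≤ R := by simpa using hR hz
    calc η * ‖z‖ ^ 2 ≤ η * (R ^ 2 + 1) := by gcongr; nlinarith [norm_nonneg z]
      _ = ε := div_mul_cancel₀ _ (by positivity)
  have hsq : ContDiff ℝ 2 fun z : E => ‖z‖ ^ 2 := contDiff_norm_sq ℝ
  have hηsq : ∀ z, ContDiffAt ℝ 2 (η • fun z : E => ‖z‖ ^ 2) z := fun z =>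
    hsq.contDiffAt.const_smul η
  calc W y ≤ W y + η * ‖y‖ ^ 2 := le_add_of_nonneg_right (by positivity)
    _ ≤ B + ε := by
      refine le_of_frontier_le_of_laplacian_pos (W := W + η • fun z => ‖z‖ ^ 2) hU hb
        (hc.add (hsq.continuous.continuousOn.const_smul η))
        (fun z hz => (hW z hz).add (hηsq z)) (fun z hz => ?_) (fun z hz => ?_) hy
      · rw [(hW z hz).laplacian_add (hηsq z), laplacian_smul _ hsq.contDiffAt,
          laplacian_norm_sq]
        have := hΔ z hz
        have : (0 : ℝ) < finrank ℝ E := by exact_mod_cast finrank_pos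
        simp only [smul_eq_mul]
        positivity
      · simp only [Pi.add_apply, Pi.smul_apply, smul_eq_mul]
        linarith [hB z hz, hηR z (frontier_subset_closure hz)]

end MaximumPrinciple

section Annulus

variable {X : Type*} [PseudoMetricSpace X] (p : X) (r R : ℝ)

theorem Metric.closure_ball_sdiff_closedBall_subset :
    closure (ball p R \ closedBall p r) ⊆ closedBall p R \ ball p r :=
  closure_minimal (Set.sdiff_subset_sdiff ball_subset_closedBall ball_subset_closedBall)
    (isClosed_closedBall.sdiff isOpen_ball)

theorem Metric.frontier_ball_sdiff_closedBall_subset :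
    frontier (ball p R \ closedBall p r) ⊆ sphere p R ∪ sphere p r := by
  intro z hz
  rw [Set.sdiff_eq] at hz
  rcases frontier_inter_subset _ _ hz with ⟨h, -⟩ | ⟨-, h⟩
  · exact Or.inl (frontier_ball_subset_sphere h)
  · rw [frontier_compl] at h
    exact Or.inr (frontier_closedBall_subset_sphere h)

end Annulus

section Plane

variable {E : Type*} [NormedAddCommGroup E] [InnerProductSpace ℝ E] [FiniteDimensional ℝ E]
  {f : E → ℝ}

theorem sub_mul_log_le_of_laplacian_nonpos (hE : finrank ℝ E = 2) (hf : ContDiff ℝ 2 f)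
    (hΔ : ∀ z, Δ f z ≤ 0) {m : ℝ} (hm : ∀ z, m ≤ f z) {p x : E} {r β c : ℝ} (hr : 0 < r)
    (hrx : r < ‖x - p‖) (hβ : 0 < β) (hc : ∀ z, ‖z - p‖ = r → c ≤ f z) :
    c - β * log (‖x - p‖ / r) ≤ f x := by
  have : Nontrivial E := nontrivial_of_finrank_eq_succ hE
  set L : E → ℝ := fun y => log ‖y - p‖
  set R := max (‖x - p‖ + 1) (r * exp ((c - m) / β))
  have hlogR : log r + (c - m) / β ≤ log R := by
    rw [← log_exp ((c - m) / β), ← log_mul hr.ne' (exp_pos _).ne']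
    exact log_le_log (by positivity) (le_max_right _ _)
  have hK : closure (ball p R \ closedBall p r) ⊆ {p}ᶜ := fun z hz hzp =>
    (closure_ball_sdiff_closedBall_subset p r R hz).2 (hzp ▸ mem_ball_self hr)
  have hx : x ∈ ball p R \ closedBall p r := by
    rw [Set.mem_sdiff, mem_ball, mem_closedBall, dist_eq_norm, not_le]
    exact ⟨(lt_add_one _).trans_le (le_max_left _ _), hrx⟩
  have hL : ∀ z ≠ p, HarmonicAt L z := fun z hz => harmonicAt_log_norm_sub hE hz
  have hf' : ∀ z, ContDiffAt ℝ 2 (-f) z := fun z => hf.contDiffAt.neg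
  have hβL : ∀ z ≠ p, ContDiffAt ℝ 2 (β • L) z := fun z hz => (hL z hz).1.const_smul β
  have hW : ∀ z ≠ p, ContDiffAt ℝ 2 (-f - β • L) z := fun z hz => (hf' z).sub (hβL z hz)
  have hWx := le_of_frontier_le_of_laplacian_nonneg (W := -f - β • L) (B := -c - β * log r)
    (isOpen_ball.sdiff isClosed_closedBall) (isBounded_ball.subset Set.sdiff_subset)
    (fun z hz => (hW z (hK hz)).continuousAt.continuousWithinAt)
    (fun z hz => hW z (hK (subset_closure hz)))
    (fun z hz => by
      have hzp := hK (subset_closure hz)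
      rw [(hf' z).laplacian_sub (hβL z hzp), laplacian_neg, laplacian_smul _ (hL z hzp).1,
        (hL z hzp).2.self_of_nhds]
      simpa using hΔ z)
    (fun z hz => by
      simp only [Pi.sub_apply, Pi.neg_apply, Pi.smul_apply, smul_eq_mul, L]
      rcases frontier_ball_sdiff_closedBall_subset p r R hz with hz | hz <;>
        rw [mem_sphere, dist_eq_norm] at hz <;> rw [hz]
      · have := mul_le_mul_of_nonneg_left hlogR hβ.le
        rw [mul_add, mul_div_cancel₀ _ hβ.ne'] at this
        linarith [hm z]
      · linarith [hc z hz])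
    (subset_closure hx)
  simp only [Pi.sub_apply, Pi.neg_apply, Pi.smul_apply, smul_eq_mul, L] at hWx
  rw [log_div (hr.trans hrx).ne' hr.ne']
  linarith

theorem le_of_laplacian_nonpos_of_bddBelow (hE : finrank ℝ E = 2) (hf : ContDiff ℝ 2 f)
    (hΔ : ∀ z, Δ f z ≤ 0) (hbdd : BddBelow (Set.range f)) (p x : E) : f p ≤ f x := by
  obtain ⟨m, hm⟩ := hbdd
  rcases eq_or_ne x p with rfl | hxp
  · rfl
  refine le_of_forall_pos_le_add fun ε hε => ?_
  have hρ : 0 < ‖x - p‖ := norm_pos_iff.2 (sub_ne_zero.2 hxp)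
  obtain ⟨δ, hδ, hball⟩ :=
    Metric.continuousAt_iff.1 hf.continuous.continuousAt (ε / 2) (half_pos hε)
  set r := min (δ / 2) (‖x - p‖ / 2)
  have hr : 0 < r := by positivity
  have hrx : r < ‖x - p‖ := (min_le_right _ _).trans_lt (half_lt_self hρ)
  have hlog : 0 < log (‖x - p‖ / r) := log_pos ((one_lt_div hr).2 hrx)
  have hinner : ∀ z, ‖z - p‖ = r → f p - ε / 2 ≤ f z := fun z hz => by
    have := hball (x := z) <| by
      rw [dist_eq_norm, hz]
      exact (min_le_left _ _).trans_lt (half_lt_self hδ)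
    linarith [abs_lt.1 (Real.dist_eq _ _ ▸ this)]
  have := sub_mul_log_le_of_laplacian_nonpos hE hf hΔ (fun z => hm ⟨z, rfl⟩) hr hrx
    (div_pos (half_pos hε) hlog) hinner
  rw [div_mul_cancel₀ _ hlog.ne'] at this
  linarith

end Plane

theorem Continuous.le_of_ae_le {X Y : Type*} [TopologicalSpace X] [MeasurableSpace X]
    [TopologicalSpace Y] [LinearOrder Y] [OrderClosedTopology Y] {μ : Measure X}
    [μ.IsOpenPosMeasure] {f g : X → Y} (hf : Continuous f) (hg : Continuous g)
    (h : ∀ᵐ x ∂μ, f x ≤ g x) (x : X) : f x ≤ g x := by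
  have : closure {x | f x ≤ g x} = Set.univ := (Measure.dense_of_ae h).closure_eq
  rw [(isClosed_le hf hg).closure_eq] at this
  exact Set.eq_univ_iff_forall.1 this x

theorem lap_eq_laplacian {h : E2 → ℝ} {x : E2} (hh : ContDiffAt ℝ 2 h x) : lap h x = Δ h x := by
  have hD : DifferentiableAt ℝ (fderiv ℝ h) x :=
    (hh.fderiv_right (m := 1) le_rfl).differentiableAt one_ne_zero
  rw [laplacian_eq_iteratedFDeriv_orthonormalBasis h (EuclideanSpace.basisFun (Fin 2) ℝ)]
  refine Finset.sum_congr rfl fun i _ => ?_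
  rw [iteratedFDeriv_two_apply]
  show fderiv ℝ (fun y => fderiv ℝ h y _) x _ = _
  rw [fderiv_clm_apply hD (differentiableAt_const _)]
  simp

theorem superharmonic_rigidity_general (h : E2 → ℝ) (hreg : ContDiff ℝ 2 h)
    (hbd : ∃ M : ℝ, ∀ x, |h x| ≤ M)
    (ε₀ : ℝ) (hε₀ : 0 < ε₀)
    (g : E2 → ℝ) (hgpos : ∀ᵐ x : E2 ∂volume, 0 ≤ g x)
    (hsuper : ∀ᵐ x : E2 ∂volume, lap h x + ε₀ * g x ≤ 0) :
    (∀ᵐ x : E2 ∂volume, g x = 0) ∧ ∃ c : ℝ, ∀ x, h x = c := by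
  have hlap : lap h = Δ h := funext fun x => lap_eq_laplacian hreg.contDiffAt
  have hΔ : ∀ x, Δ h x ≤ 0 :=
    hreg.continuous_laplacian.le_of_ae_le (μ := volume) continuous_const <| by
      filter_upwards [hsuper, hgpos] with x hx hgx
      rw [← hlap]
      nlinarith
  obtain ⟨M, hM⟩ := hbd
  have hbdd : BddBelow (Set.range h) :=
    ⟨-M, by rintro _ ⟨x, rfl⟩; linarith [neg_abs_le (h x), hM x]⟩
  have hle := le_of_laplacian_nonpos_of_bddBelow finrank_euclideanSpace_fin hreg hΔ hbdd
  have hconst : ∀ x, h x = h 0 := fun x => le_antisymm (hle x 0) (hle 0 x)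
  have hlap0 : ∀ x, lap h x = 0 := by
    rw [hlap, show h = fun _ => h 0 from funext hconst]
    simp
  refine ⟨?_, h 0, hconst⟩
  filter_upwards [hsuper, hgpos] with x hx hgx
  rw [hlap0, zero_add] at hx
  nlinarith

/-- If `h : ℝ² → ℝ` is a bounded `C²` function, `ε₀ > 0`,
`g ∈ L²(ℝ²)` is a.e. nonnegative, and `Δh + ε₀ g ≤ 0` a.e., then `g = 0` a.e.
and `h` is constant. -/
theorem superharmonic_rigidity (h : E2 → ℝ) (hreg : ContDiff ℝ 2 h)
    (hbd : ∃ M : ℝ, ∀ x, |h x| ≤ M)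
    (ε₀ : ℝ) (hε₀ : 0 < ε₀)
    (g : E2 → ℝ) (hg : MemLp g 2 volume) (hgpos : ∀ᵐ x : E2 ∂volume, 0 ≤ g x)
    (hsuper : ∀ᵐ x : E2 ∂volume, lap h x + ε₀ * g x ≤ 0) :
    (∀ᵐ x : E2 ∂volume, g x = 0) ∧ ∃ c : ℝ, ∀ x, h x = c :=
  superharmonic_rigidity_general h hreg hbd ε₀ hε₀ g hgpos hsuper
end
end

section
/- (Maximum principle for the orientation field.) Let T > 0 and let (u, d) be a smooth solution on [0,T] × ℝ² of the transported harmonic map heat flow d_t + (u·∇)d = Δd + |∇d|² d with |d(t,x)| = 1 for all (t,x), where u is a bounded smooth vector field and d together with its first and second spatial derivatives is bounded. If inf_{x∈ℝ²} d₃(0,x) ≥ 0, then for every t ∈ [0,T], inf_{x∈ℝ²} d₃(t,x) ≥ inf_{x∈ℝ²} d₃(0,x), where d₃ denotes the third component of d. -/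
open MeasureTheory Filter Topology Real

noncomputable section

/-! ### Auxiliary lemmas -/

lemma coord_le_norm {n : ℕ} (x : EuclideanSpace ℝ (Fin n)) (j : Fin n) : |x j| ≤ ‖x‖ := by
  rw [EuclideanSpace.norm_eq]
  have h1 : |x j| = Real.sqrt (‖x j‖^2) := by
    rw [Real.sqrt_sq_eq_abs]; simp
  rw [h1]
  apply Real.sqrt_le_sqrt
  exact Finset.single_le_sum (f := fun i => ‖x i‖^2) (fun i _ => by positivity) (Finset.mem_univ j)

lemma contDiff_pd (i : Fin 2) {f : E2 → ℝ} (hf : ContDiff ℝ (⊤ : ℕ∞) f) : ContDiff ℝ (⊤ : ℕ∞) (pd i f) :=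
  (hf.fderiv_right (m := (⊤ : ℕ∞)) (by simp)).clm_apply (contDiff_const (c := EuclideanSpace.single i 1))

/-- The quadratic barrier function. -/
def Qf (c : E2) (x : E2) : ℝ := ∑ i : Fin 2, (x i - c i)^2

lemma sumproj_apply (x c : E2) (j : Fin 2) :
    (∑ i : Fin 2, (2*(x i - c i)) • (EuclideanSpace.proj i : E2 →L[ℝ] ℝ))
      (EuclideanSpace.single j 1) = 2 * (x j - c j) := by
  simp only [ContinuousLinearMap.coe_sum', Finset.sum_apply, ContinuousLinearMap.coe_smul',
    Pi.smul_apply, smul_eq_mul]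
  rw [Finset.sum_eq_single j]
  · simp [EuclideanSpace.single_apply]
  · intro b _ hb
    simp [EuclideanSpace.single_apply, hb]
  · simp

lemma hasFDerivAt_Qf (c x : E2) :
    HasFDerivAt (Qf c) (∑ i : Fin 2, (2*(x i - c i)) • (EuclideanSpace.proj i : E2 →L[ℝ] ℝ)) x := by
  apply HasFDerivAt.fun_sum
  intro i _
  have h1 : HasFDerivAt (fun y : E2 => y i - c i) (EuclideanSpace.proj i : E2 →L[ℝ] ℝ) x :=
    ((EuclideanSpace.proj i : E2 →L[ℝ] ℝ).hasFDerivAt).sub_const _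
  have h2 := (hasDerivAt_pow 2 (x i - c i)).comp_hasFDerivAt x h1
  simpa [Function.comp_def] using h2

lemma contDiff_Qf (c : E2) : ContDiff ℝ (⊤ : ℕ∞) (Qf c) := by
  apply ContDiff.sum
  intro i _
  exact (((EuclideanSpace.proj i : E2 →L[ℝ] ℝ).contDiff).sub contDiff_const).pow 2

lemma Qf_nonneg (c x : E2) : 0 ≤ Qf c x := by
  apply Finset.sum_nonneg; intro i _; positivity

lemma Qf_self (c : E2) : Qf c c = 0 := by simp [Qf]

lemma Qf_eq_norm (c x : E2) : Qf c x = ‖x - c‖^2 := by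
  rw [EuclideanSpace.norm_eq, Real.sq_sqrt (by positivity)]
  unfold Qf
  congr 1
  ext i
  simp [Real.norm_eq_abs, sq_abs]

lemma second_deriv_nonneg_of_isLocalMin {g : ℝ → ℝ} (hg : ContDiff ℝ (⊤ : ℕ∞) g)
    (hmin : IsLocalMin g 0) : 0 ≤ deriv (deriv g) 0 := by
  by_contra hneg
  push_neg at hneg
  have hg1 : Differentiable ℝ g := hg.differentiable (by simp)
  have hg2' : ContDiff ℝ (⊤ : ℕ∞) (deriv g) := (contDiff_infty_iff_deriv.mp (hg.of_le (by simp))).2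
  have hg2 : Differentiable ℝ (deriv g) := hg2'.differentiable (by simp)
  have h0 : deriv g 0 = 0 := hmin.deriv_eq_zero
  have hslope : Tendsto (slope (deriv g) 0) (𝓝[≠] 0) (𝓝 (deriv (deriv g) 0)) :=
    hasDerivAt_iff_tendsto_slope.mp (hg2 0).hasDerivAt
  have hev : ∀ᶠ s in 𝓝[>] (0:ℝ), slope (deriv g) 0 s < 0 := by
    have h1 : ∀ᶠ s in 𝓝[≠] (0:ℝ), slope (deriv g) 0 s < 0 :=
      hslope.eventually (Filter.Tendsto.eventually_lt_const hneg tendsto_id)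
    exact h1.filter_mono (nhdsWithin_mono 0 (fun s hs => ne_of_gt hs))
  have hev2 : ∀ᶠ s in 𝓝[>] (0:ℝ), deriv g s < 0 := by
    filter_upwards [hev, self_mem_nhdsWithin] with s hs hs'
    have heq : slope (deriv g) 0 s = deriv g s / s := by
      simp [slope_def_field, h0]
    rw [heq] at hs
    rcases div_neg_iff.mp hs with ⟨_, h⟩ | ⟨h, _⟩
    · exact absurd hs' (not_lt.mpr h.le)
    · exact h
  obtain ⟨r, hr, hIoo⟩ : ∃ r, r ∈ Set.Ioi (0:ℝ) ∧ Set.Ioo (0:ℝ) r ⊆ {s | deriv g s < 0} :=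
    mem_nhdsGT_iff_exists_Ioo_subset.mp hev2
  obtain ⟨r2, hr2, hmin2⟩ := Metric.eventually_nhds_iff.mp hmin
  have hrpos : 0 < r := hr
  set s₀ := min r r2 / 2 with hs₀def
  have hs₀ : 0 < s₀ := by
    have := lt_min hrpos hr2
    positivity
  have hs₀r : s₀ < r := by
    have h1 : min r r2 ≤ r := min_le_left _ _
    have := hrpos; simp only [hs₀def]; linarith
  have hs₀r2 : s₀ < r2 := by
    have h1 : min r r2 ≤ r2 := min_le_right _ _
    simp only [hs₀def]; linarith
  obtain ⟨c, hc, hceq⟩ := exists_deriv_eq_slope g hs₀ (hg1.continuous.continuousOn)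
    (fun x _ => (hg1 x).differentiableWithinAt)
  have hc1 : deriv g c < 0 := hIoo ⟨hc.1, lt_trans hc.2 hs₀r⟩
  have hge : g 0 ≤ g s₀ := hmin2 (by
    simp [abs_of_pos hs₀, Real.dist_eq]
    linarith)
  have : (0:ℝ) ≤ deriv g c := by
    rw [hceq]
    apply div_nonneg (by linarith) (by linarith)
  linarith

lemma pd_pd_nonneg_of_isLocalMin {f : E2 → ℝ} (hf : ContDiff ℝ (⊤ : ℕ∞) f) {x₀ : E2}
    (hmin : IsLocalMin f x₀) (i : Fin 2) : 0 ≤ pd i (pd i f) x₀ := by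
  set v : E2 := EuclideanSpace.single i 1 with hv
  set p : ℝ → E2 := fun s => x₀ + s • v with hp
  have hp0 : p 0 = x₀ := by simp [hp]
  have hpcd : ContDiff ℝ (⊤ : ℕ∞) p := contDiff_const.add (contDiff_id.smul contDiff_const)
  have hpd : ∀ s, HasDerivAt p v s := by
    intro s
    simpa [hp] using ((hasDerivAt_id s).smul_const v).const_add x₀
  set g : ℝ → ℝ := fun s => f (p s) with hg
  have hgcd : ContDiff ℝ (⊤ : ℕ∞) g := hf.comp hpcd
  have hgmin : IsLocalMin g 0 := by
    have hcont : ContinuousAt p 0 := hpcd.continuous.continuousAt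
    have htd := hcont.tendsto
    rw [hp0] at htd
    have hev := htd.eventually hmin
    simpa [IsLocalMin, IsMinFilter, hg, hp0] using hev
  have hderiv : deriv g = fun s => pd i f (p s) := by
    funext s
    have h1 : HasDerivAt g (fderiv ℝ f (p s) v) s :=
      ((hf.differentiable (by simp) (p s)).hasFDerivAt).comp_hasDerivAt s (hpd s)
    exact h1.deriv
  have h2 : deriv (deriv g) 0 = pd i (pd i f) x₀ := by
    rw [hderiv]
    have hpdf : ContDiff ℝ (⊤ : ℕ∞) (pd i f) := contDiff_pd i hf
    have h1 : HasDerivAt (fun s => pd i f (p s)) (fderiv ℝ (pd i f) x₀ v) 0 := by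
      have := ((hpdf.differentiable (by simp) (p 0)).hasFDerivAt).comp_hasDerivAt 0 (hpd 0)
      rwa [hp0] at this
    rw [h1.deriv]
    rfl
  rw [← h2]
  exact second_deriv_nonneg_of_isLocalMin hgcd hgmin

lemma deriv_nonpos_of_isMinOn_left {g : ℝ → ℝ} {t a L : ℝ} (hd : HasDerivAt g L t)
    (hlt : a < t) (hmin : ∀ s ∈ Set.Icc a t, g t ≤ g s) : L ≤ 0 := by
  have hslope : Tendsto (slope g t) (𝓝[≠] t) (𝓝 L) := hasDerivAt_iff_tendsto_slope.mp hd
  have h1 : Tendsto (slope g t) (𝓝[<] t) (𝓝 L) :=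
    hslope.mono_left (nhdsWithin_mono t (fun s hs => ne_of_lt hs))
  have h2 : ∀ᶠ s in 𝓝[<] t, slope g t s ≤ 0 := by
    have hIoo : Set.Ioo a t ∈ 𝓝[<] t := Ioo_mem_nhdsLT_of_mem ⟨hlt, le_refl t⟩
    filter_upwards [hIoo] with s hs
    have hge : g t ≤ g s := hmin s ⟨hs.1.le, hs.2.le⟩
    have heq : slope g t s = (g s - g t) / (s - t) := slope_def_field g t s
    rw [heq]
    apply div_nonpos_of_nonneg_of_nonpos (by linarith) (by linarith [hs.2])
  exact le_of_tendsto h1 h2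

set_option maxHeartbeats 2000000 in
/-- **Maximum principle for the orientation field.**
Let `(u, d)` be a smooth bounded solution on `[0,T] × ℝ²` of
`d_t + (u·∇)d = Δd + |∇d|² d` with `|d| = 1`.  If the third component `d₃(0,·)` is
bounded below by some `m ≥ 0`, then `d₃(t,·) ≥ m` for all `t ∈ [0,T]`; in particular
`inf d₃(t,·) ≥ inf d₃(0,·)` whenever the latter is nonnegative. -/
theorem orientation_minimum_principle (T : ℝ) (hT : 0 < T)
    (u : ℝ → E2 → E2) (d : ℝ → E2 → E3)
    (hu_smooth : ContDiffOn ℝ (⊤ : ℕ∞) (fun q : ℝ × E2 => u q.1 q.2) (Set.Icc 0 T ×ˢ Set.univ))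
    (hd_smooth : ContDiffOn ℝ (⊤ : ℕ∞) (fun q : ℝ × E2 => d q.1 q.2) (Set.Icc 0 T ×ˢ Set.univ))
    (hunit : ∀ t ∈ Set.Icc (0:ℝ) T, ∀ x, ‖d t x‖ = 1)
    (hu_bd : ∃ M : ℝ, ∀ t ∈ Set.Icc (0:ℝ) T, ∀ x, ‖u t x‖ ≤ M)
    (hd1_bd : ∃ M : ℝ, ∀ t ∈ Set.Icc (0:ℝ) T, ∀ x, ∀ i : Fin 2, ∀ j : Fin 3,
      |pd i (fun y => d t y j) x| ≤ M)
    (hd2_bd : ∃ M : ℝ, ∀ t ∈ Set.Icc (0:ℝ) T, ∀ x, ∀ i i' : Fin 2, ∀ j : Fin 3,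
      |pd i' (pd i (fun y => d t y j)) x| ≤ M)
    (heq : ∀ t ∈ Set.Ioo (0:ℝ) T, ∀ x, ∀ j : Fin 3,
      deriv (fun s => d s x j) t + ∑ i : Fin 2, u t x i * pd i (fun y => d t y j) x
        = lap (fun y => d t y j) x + gradSq (d t) x * d t x j)
    (m : ℝ) (hm : 0 ≤ m) (hinit : ∀ x, m ≤ d 0 x 2) :
    ∀ t ∈ Set.Icc (0:ℝ) T, ∀ x, m ≤ d t x 2 := by
  obtain ⟨Mu, hMu⟩ := hu_bd
  obtain ⟨M1, hM1⟩ := hd1_bd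
  have hMu0 : 0 ≤ Mu := le_trans (norm_nonneg _) (hMu 0 ⟨le_refl 0, hT.le⟩ 0)
  set K : ℝ := 6*M1^2 + 1 with hKdef
  have hK : 0 < K := by positivity
  -- pointwise bound |d₃| ≤ 1 and m ≤ 1
  have habs : ∀ t ∈ Set.Icc (0:ℝ) T, ∀ x, |d t x 2| ≤ 1 := by
    intro t ht x
    have := coord_le_norm (d t x) 2
    rwa [hunit t ht x] at this
  have hm1 : m ≤ 1 := by
    have h1 := hinit 0
    have h2 := habs 0 ⟨le_refl 0, hT.le⟩ 0
    have := abs_le.mp h2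
    linarith
  -- gradSq bounds
  have hgs0 : ∀ t x, 0 ≤ gradSq (d t) x := by
    intro t x
    apply Finset.sum_nonneg; intro i _
    apply Finset.sum_nonneg; intro j _
    positivity
  have hgs : ∀ t ∈ Set.Icc (0:ℝ) T, ∀ x, gradSq (d t) x ≤ 6*M1^2 := by
    intro t ht x
    have h1 : gradSq (d t) x ≤ ∑ _i : Fin 2, ∑ _j : Fin 3, M1^2 := by
      apply Finset.sum_le_sum; intro i _
      apply Finset.sum_le_sum; intro j _
      have := hM1 t ht x i j
      calc pd i (fun y => d t y j) x ^ 2 = |pd i (fun y => d t y j) x|^2 := (sq_abs _).symm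
        _ ≤ M1^2 := by
          apply pow_le_pow_left₀ (abs_nonneg _) this
    have h2 : (∑ _i : Fin 2, ∑ _j : Fin 3, M1^2 : ℝ) = 6*M1^2 := by
      simp; ring
    linarith [h1, h2.le]
  -- spatial slices are smooth
  have hslice : ∀ t ∈ Set.Icc (0:ℝ) T, ContDiff ℝ (⊤ : ℕ∞) (fun x : E2 => d t x 2) := by
    intro t ht
    have h1 : ContDiff ℝ (⊤ : ℕ∞) (fun x : E2 => ((t, x) : ℝ × E2)) := contDiff_const.prodMk contDiff_id
    have h2 : ContDiffOn ℝ (⊤ : ℕ∞) (fun x : E2 => d t x) Set.univ := by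
      apply hd_smooth.comp h1.contDiffOn
      intro x _
      exact ⟨ht, Set.mem_univ x⟩
    have h3 : ContDiff ℝ (⊤ : ℕ∞) (fun x : E2 => d t x) := contDiffOn_univ.mp h2
    exact (EuclideanSpace.proj (2 : Fin 3) : E3 →L[ℝ] ℝ).contDiff.comp h3
  -- main claim on the open interval
  have main : ∀ t₀ ∈ Set.Ioo (0:ℝ) T, ∀ x₁ : E2, m ≤ d t₀ x₁ 2 := by
    intro t₀ ht₀ x₁
    by_contra hcon
    push_neg at hcon
    set δ' : ℝ := Real.exp (-(K*t₀)) * (m - d t₀ x₁ 2) with hδ'def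
    have hexpt₀ : 0 < Real.exp (-(K*t₀)) := Real.exp_pos _
    have hδ' : 0 < δ' := mul_pos hexpt₀ (by linarith)
    have habs₀ := abs_le.mp (habs t₀ ⟨ht₀.1.le, ht₀.2.le⟩ x₁)
    have hδ'2 : δ' ≤ 2 := by
      have hexple : Real.exp (-(K*t₀)) ≤ 1 := by
        apply Real.exp_le_one_iff.mpr
        have : 0 ≤ K * t₀ := le_of_lt (mul_pos hK ht₀.1)
        linarith
      have h2 : m - d t₀ x₁ 2 ≤ 2 := by linarith
      calc δ' ≤ 1 * (m - d t₀ x₁ 2) := by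
            apply mul_le_mul_of_nonneg_right hexple (by linarith)
        _ ≤ 2 := by linarith
    set B : ℝ := 4 + 4*Mu*Real.sqrt (2+δ') with hBdef
    have hsq : 0 ≤ Real.sqrt (2+δ') := Real.sqrt_nonneg _
    have hB : 0 < B := by positivity
    set η : ℝ := min 1 (δ' / (2*(B + 1))) with hηdef
    have hη : 0 < η := lt_min one_pos (by positivity)
    have hη1 : η ≤ 1 := min_le_left _ _
    have hηB : η * B < δ' := by
      have h1 : η ≤ δ' / (2*(B+1)) := min_le_right _ _
      have h2 : η * (2*(B+1)) ≤ δ' := by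
        rw [← le_div_iff₀ (by positivity)]
        exact h1
      have h3 : 0 < η*(B+2) := by positivity
      have h4 : η*(2*(B+1)) = η*B + η*(B+2) := by ring
      linarith
    set ε : ℝ := η^2 with hεdef
    have hε : 0 < ε := by positivity
    set R : ℝ := Real.sqrt (2+δ') / η with hRdef
    have hR : 0 < R := by
      apply div_pos _ hη
      apply Real.sqrt_pos.mpr; linarith
    have hεR2 : ε * R^2 = 2 + δ' := by
      rw [hεdef, hRdef, div_pow, Real.sq_sqrt (by linarith)]
      field_simp
    have hεR : ε * R = η * Real.sqrt (2+δ') := by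
      rw [hεdef, hRdef]
      field_simp
    -- the barrier functional
    set F : ℝ × E2 → ℝ :=
      fun q => Real.exp (-(K*q.1)) * (d q.1 q.2 2 - m) + ε * Qf x₁ q.2 with hFdef
    set S : Set (ℝ × E2) := Set.Icc 0 t₀ ×ˢ Metric.closedBall x₁ R with hSdef
    have hScomp : IsCompact S := (isCompact_Icc).prod (isCompact_closedBall x₁ R)
    have hSne : S.Nonempty := ⟨(t₀, x₁), ⟨⟨ht₀.1.le, le_refl t₀⟩, Metric.mem_closedBall_self hR.le⟩⟩
    have hSsub : S ⊆ Set.Icc 0 T ×ˢ Set.univ := by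
      rintro ⟨s, x⟩ ⟨hs, _⟩
      exact ⟨⟨hs.1, le_trans hs.2 ht₀.2.le⟩, Set.mem_univ x⟩
    have hFcont : ContinuousOn F S := by
      apply ContinuousOn.add
      · apply ContinuousOn.mul
        · exact (Real.continuous_exp.comp ((continuous_const.mul continuous_fst).neg)).continuousOn
        · apply ContinuousOn.sub _ continuousOn_const
          have hd3 : ContinuousOn (fun q : ℝ × E2 => d q.1 q.2 2) (Set.Icc 0 T ×ˢ Set.univ) := by
            exact (EuclideanSpace.proj (2 : Fin 3) : E3 →L[ℝ] ℝ).continuous.comp_continuousOn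
              hd_smooth.continuousOn
          exact hd3.mono hSsub
      · exact (continuous_const.mul ((contDiff_Qf x₁).continuous.comp continuous_snd)).continuousOn
    obtain ⟨⟨ts, xs⟩, hmemS, hminOn⟩ := hScomp.exists_isMinOn hSne hFcont
    have hminOn' : ∀ q ∈ S, F (ts, xs) ≤ F q := fun q hq => hminOn hq
    have htsmem : ts ∈ Set.Icc 0 t₀ := hmemS.1
    have hxsmem : xs ∈ Metric.closedBall x₁ R := hmemS.2
    -- minimum value is ≤ -δ'
    have hFt₀ : F (t₀, x₁) = -δ' := by
      simp only [hFdef, Qf_self, mul_zero, add_zero, hδ'def]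
      ring
    have hval : F (ts, xs) ≤ -δ' := by
      rw [← hFt₀]
      exact hminOn' (t₀, x₁) ⟨⟨ht₀.1.le, le_refl t₀⟩, Metric.mem_closedBall_self hR.le⟩
    -- lower bound for F
    have hFlow : ∀ q ∈ S, -2 + ε * Qf x₁ q.2 ≤ F q := by
      rintro ⟨s, x⟩ hq
      have hs : s ∈ Set.Icc 0 T := (hSsub hq).1
      have hexp1 : Real.exp (-(K*s)) ≤ 1 := by
        apply Real.exp_le_one_iff.mpr
        have : 0 ≤ K * s := mul_nonneg hK.le hs.1
        linarith
      have hexp0 : 0 < Real.exp (-(K*s)) := Real.exp_pos _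
      have habs' := abs_le.mp (habs s hs x)
      have h1 : -2 ≤ Real.exp (-(K*s)) * (d s x 2 - m) := by
        have ha : -2 ≤ d s x 2 - m := by linarith
        have hb : Real.exp (-(K*s)) * (-2) ≤ Real.exp (-(K*s)) * (d s x 2 - m) :=
          mul_le_mul_of_nonneg_left ha hexp0.le
        linarith
      simp only [hFdef]
      linarith
    -- the spatial point is interior
    have hxslt : dist xs x₁ < R := by
      rcases lt_or_eq_of_le (Metric.mem_closedBall.mp hxsmem) with h | h
      · exact h
      · exfalso
        have hQ : Qf x₁ xs = R^2 := by
          rw [Qf_eq_norm, ← dist_eq_norm, h]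
        have h2 := hFlow (ts, xs) hmemS
        rw [hQ] at h2
        rw [hεR2] at h2
        linarith
    -- the time is positive
    have hts0 : 0 < ts := by
      rcases lt_or_eq_of_le htsmem.1 with h | h
      · exact h
      · exfalso
        have h0 : F (0, xs) = (d 0 xs 2 - m) + ε * Qf x₁ xs := by
          simp [hFdef]
        have h1 : 0 ≤ F (0, xs) := by
          rw [h0]
          have ha := hinit xs
          have hb := mul_nonneg hε.le (Qf_nonneg x₁ xs)
          linarith
        rw [← h] at hval
        linarith
    have htsT : ts ∈ Set.Ioo (0:ℝ) T := ⟨hts0, lt_of_le_of_lt htsmem.2 ht₀.2⟩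
    have htsIcc : ts ∈ Set.Icc (0:ℝ) T := ⟨hts0.le, htsT.2.le⟩
    -- abbreviations at the minimum point
    set e : ℝ := Real.exp (-(K*ts)) with hedef
    have he0 : 0 < e := Real.exp_pos _
    have he1 : e ≤ 1 := by
      apply Real.exp_le_one_iff.mpr
      have : 0 ≤ K * ts := mul_nonneg hK.le hts0.le
      linarith
    -- smoothness of the slice
    have hsm : ContDiff ℝ (⊤ : ℕ∞) (fun y : E2 => d ts y 2) := hslice ts htsIcc
    set φ : E2 → ℝ := fun x => e * (d ts x 2 - m) + ε * Qf x₁ x with hφdef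
    have hφeq : ∀ x, φ x = F (ts, x) := fun x => rfl
    have hφsm : ContDiff ℝ (⊤ : ℕ∞) φ :=
      (contDiff_const.mul (hsm.sub contDiff_const)).add (contDiff_const.mul (contDiff_Qf x₁))
    have hφmin : IsLocalMin φ xs := by
      have hball : Metric.closedBall x₁ R ∈ 𝓝 xs :=
        Filter.mem_of_superset (Metric.isOpen_ball.mem_nhds hxslt) Metric.ball_subset_closedBall
      filter_upwards [hball] with x hx
      have := hminOn' (ts, x) ⟨htsmem, hx⟩
      simpa [hφeq] using this
    -- first spatial derivatives of φ
    have hφD : ∀ x : E2, HasFDerivAt φ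
        (e • (fderiv ℝ (fun y : E2 => d ts y 2) x) +
          ε • (∑ i : Fin 2, (2*(x i - x₁ i)) • (EuclideanSpace.proj i : E2 →L[ℝ] ℝ))) x := by
      intro x
      have h1 : HasFDerivAt (fun y : E2 => d ts y 2) (fderiv ℝ (fun y : E2 => d ts y 2) x) x :=
        (hsm.differentiable (by simp) x).hasFDerivAt
      exact ((h1.sub_const m).const_mul e).add ((hasFDerivAt_Qf x₁ x).const_mul ε)
    have hpdφ : ∀ (i : Fin 2) (x : E2),
        pd i φ x = e * pd i (fun y : E2 => d ts y 2) x + ε * (2 * (x i - x₁ i)) := by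
      intro i x
      unfold pd
      rw [(hφD x).fderiv]
      simp only [ContinuousLinearMap.add_apply, ContinuousLinearMap.coe_smul', Pi.smul_apply,
        smul_eq_mul]
      rw [sumproj_apply]
    -- gradient vanishes at the minimum
    have hgrad0 : ∀ i : Fin 2, pd i φ xs = 0 := by
      intro i
      unfold pd
      rw [hφmin.fderiv_eq_zero]
      simp
    have hgrad : ∀ i : Fin 2, e * pd i (fun y : E2 => d ts y 2) xs = -(2*ε*(xs i - x₁ i)) := by
      intro i
      have := hgrad0 i
      rw [hpdφ i xs] at this
      linarith
    -- second derivatives are nonneg at the minimum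
    have hsecond : ∀ i : Fin 2, 0 ≤ e * pd i (pd i (fun y : E2 => d ts y 2)) xs + 2*ε := by
      intro i
      have h0 := pd_pd_nonneg_of_isLocalMin hφsm hφmin i
      have hfun : pd i φ = fun x => e * pd i (fun y : E2 => d ts y 2) x + ε * (2 * (x i - x₁ i)) :=
        funext (hpdφ i)
      rw [hfun] at h0
      -- compute pd i of the rhs at xs
      have hpdd : ContDiff ℝ (⊤ : ℕ∞) (pd i (fun y : E2 => d ts y 2)) := contDiff_pd i hsm
      have h1 : HasFDerivAt (fun x : E2 => e * pd i (fun y : E2 => d ts y 2) x + ε * (2 * (x i - x₁ i)))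
          (e • (fderiv ℝ (pd i (fun y : E2 => d ts y 2)) xs) +
            ε • ((2:ℝ) • (EuclideanSpace.proj i : E2 →L[ℝ] ℝ))) xs := by
        have ha : HasFDerivAt (pd i (fun y : E2 => d ts y 2))
            (fderiv ℝ (pd i (fun y : E2 => d ts y 2)) xs) xs :=
          (hpdd.differentiable (by simp) xs).hasFDerivAt
        have hb : HasFDerivAt (fun x : E2 => x i - x₁ i) (EuclideanSpace.proj i : E2 →L[ℝ] ℝ) xs :=
          ((EuclideanSpace.proj i : E2 →L[ℝ] ℝ).hasFDerivAt).sub_const _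
        exact (ha.const_mul e).add ((hb.const_mul 2).const_mul ε)
      have h3 : pd i (fun x : E2 => e * pd i (fun y : E2 => d ts y 2) x + ε * (2 * (x i - x₁ i))) xs
          = e * pd i (pd i (fun y : E2 => d ts y 2)) xs + 2*ε := by
        have hrfl : pd i (fun x : E2 => e * pd i (fun y : E2 => d ts y 2) x + ε * (2 * (x i - x₁ i))) xs
            = fderiv ℝ (fun x : E2 => e * pd i (fun y : E2 => d ts y 2) x + ε * (2 * (x i - x₁ i))) xs
              (EuclideanSpace.single i 1) := rfl
        rw [hrfl, h1.fderiv]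
        simp only [ContinuousLinearMap.add_apply, ContinuousLinearMap.coe_smul', Pi.smul_apply,
          smul_eq_mul]
        have hr2 : (fderiv ℝ (pd i fun y => d ts y 2) xs) (EuclideanSpace.single i 1)
            = pd i (pd i fun y => d ts y 2) xs := rfl
        rw [hr2]
        have hr3 : (EuclideanSpace.proj i : E2 →L[ℝ] ℝ) (EuclideanSpace.single i 1) = 1 := by
          simp [EuclideanSpace.single_apply]
        rw [hr3]
        ring
      rw [h3] at h0
      exact h0
    -- Laplacian bound at the minimum
    have hlap : -(4*ε) ≤ e * lap (fun y : E2 => d ts y 2) xs := by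
      unfold lap
      rw [Finset.mul_sum]
      have h1 : ∀ i : Fin 2, -(2*ε) ≤ e * pd i (pd i (fun y : E2 => d ts y 2)) xs := by
        intro i; linarith [hsecond i]
      calc -(4*ε) = ∑ _i : Fin 2, -(2*ε) := by simp; ring
        _ ≤ _ := Finset.sum_le_sum (fun i _ => h1 i)
    -- time derivative at the minimum
    have htder : DifferentiableAt ℝ (fun s => d s xs 2) ts := by
      have hmemnhds : (Set.Icc 0 T ×ˢ Set.univ : Set (ℝ × E2)) ∈ 𝓝 ((ts, xs) : ℝ × E2) :=
        prod_mem_nhds (Icc_mem_nhds hts0 htsT.2) Filter.univ_mem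
      have hDAt : ContDiffAt ℝ (⊤ : ℕ∞) (fun q : ℝ × E2 => d q.1 q.2) (ts, xs) :=
        hd_smooth.contDiffAt hmemnhds
      have h1 : ContDiffAt ℝ (⊤ : ℕ∞) (fun s : ℝ => d s xs) ts :=
        hDAt.comp ts (contDiffAt_id.prodMk contDiffAt_const)
      have h2 : ContDiffAt ℝ (⊤ : ℕ∞) (fun s : ℝ => d s xs 2) ts :=
        ((EuclideanSpace.proj (2 : Fin 3) : E3 →L[ℝ] ℝ).contDiff.contDiffAt).comp ts h1
      exact h2.differentiableAt (by simp)
    set D : ℝ := deriv (fun s => d s xs 2) ts with hDdef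
    have hψ : HasDerivAt (fun s : ℝ => F (s, xs))
        (Real.exp (-(K*ts)) * -K * (d ts xs 2 - m) + Real.exp (-(K*ts)) * D) ts := by
      have h1 : HasDerivAt (fun s : ℝ => Real.exp (-(K*s))) (Real.exp (-(K*ts)) * -K) ts := by
        have ha : HasDerivAt (fun s : ℝ => -(K*s)) (-K) ts := by
          simpa [Pi.neg_def] using ((hasDerivAt_id ts).const_mul K).neg
        exact ha.exp
      have h2 : HasDerivAt (fun s => d s xs 2) D ts := htder.hasDerivAt
      have h3 := (h1.mul (h2.sub_const m)).add_const (ε * Qf x₁ xs)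
      exact h3.congr_deriv (by ring)
    have hψle : Real.exp (-(K*ts)) * -K * (d ts xs 2 - m) + Real.exp (-(K*ts)) * D ≤ 0 := by
      apply deriv_nonpos_of_isMinOn_left hψ hts0
      intro s hs
      exact hminOn' (s, xs) ⟨⟨hs.1, le_trans hs.2 htsmem.2⟩, hxsmem⟩
    -- the PDE at the minimum point
    have hpde := heq ts htsT xs 2
    -- numeric assembly
    set c : ℝ := gradSq (d ts) xs with hcdef
    have hc0 : 0 ≤ c := hgs0 ts xs
    have hcK : c ≤ K - 1 := by
      have := hgs ts htsIcc xs
      simp only [hKdef]; linarith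
    set f : ℝ := d ts xs 2 - m with hfdef
    set hstar : ℝ := e * f with hstardef
    have hstar_le : hstar ≤ -δ' := by
      have hQ := Qf_nonneg x₁ xs
      have hFv : F (ts, xs) = hstar + ε * Qf x₁ xs := rfl
      have hb := mul_nonneg hε.le hQ
      linarith
    -- transport term bound
    have htrans : ∀ i : Fin 2, |u ts xs i * (2*ε*(xs i - x₁ i))| ≤ 2*ε*Mu*R := by
      intro i
      have h1 : |u ts xs i| ≤ Mu := le_trans (coord_le_norm (u ts xs) i) (hMu ts htsIcc xs)
      have h2 : |xs i - x₁ i| ≤ R := by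
        have h3 : |(xs - x₁) i| ≤ ‖xs - x₁‖ := coord_le_norm (xs - x₁) i
        have h4 : (xs - x₁) i = xs i - x₁ i := rfl
        rw [h4] at h3
        rw [dist_eq_norm] at hxslt
        linarith
      rw [abs_mul, abs_mul, abs_mul]
      have : |(2:ℝ)| = 2 := by norm_num
      rw [this, abs_of_pos hε]
      calc |u ts xs i| * (2 * ε * |xs i - x₁ i|) ≤ Mu * (2 * ε * R) := by
            apply mul_le_mul h1 _ (by positivity) hMu0
            apply mul_le_mul_of_nonneg_left h2 (by positivity)
        _ = 2*ε*Mu*R := by ring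
    -- sum over i of the transport term
    have htrans_sum : (∑ i : Fin 2, u ts xs i * (e * pd i (fun y => d ts y 2) xs)) ≤ 4*ε*Mu*R := by
      have h1 : ∀ i : Fin 2, u ts xs i * (e * pd i (fun y => d ts y 2) xs) ≤ 2*ε*Mu*R := by
        intro i
        rw [hgrad i]
        have h0 := htrans i
        have h2 := neg_le_abs (u ts xs i * (2*ε*(xs i - x₁ i)))
        have h3 : u ts xs i * -(2*ε*(xs i - x₁ i)) = -(u ts xs i * (2*ε*(xs i - x₁ i))) := by ring
        rw [h3]
        linarith
      calc (∑ i : Fin 2, u ts xs i * (e * pd i (fun y => d ts y 2) xs))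
          ≤ ∑ _i : Fin 2, 2*ε*Mu*R := Finset.sum_le_sum (fun i _ => h1 i)
        _ = 4*ε*Mu*R := by simp; ring
    -- put the PDE into the time-derivative inequality
    have hkey : 0 ≥ e * lap (fun y => d ts y 2) xs + (c - K) * hstar + c * e * m
        - (4*ε*Mu*R) := by
      have hD : D = lap (fun y => d ts y 2) xs + c * d ts xs 2
          - ∑ i : Fin 2, u ts xs i * pd i (fun y => d ts y 2) xs := by
        rw [hDdef]
        linarith [hpde]
      have heD : e * D = e * lap (fun y => d ts y 2) xs + c * hstar + c * e * m
          - ∑ i : Fin 2, u ts xs i * (e * pd i (fun y => d ts y 2) xs) := by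
        rw [hD]
        rw [mul_sub, mul_add, Finset.mul_sum]
        have h1 : ∀ i : Fin 2, e * (u ts xs i * pd i (fun y => d ts y 2) xs)
            = u ts xs i * (e * pd i (fun y => d ts y 2) xs) := fun i => by ring
        rw [Finset.sum_congr rfl (fun i _ => h1 i)]
        have h2 : e * (c * d ts xs 2) = c * hstar + c * e * m := by
          rw [hstardef, hfdef]; ring
        linarith
      have h3 : e * -K * f = -K * hstar := by rw [hstardef]; ring
      have h4 : e * (-K) * f + e * D ≤ 0 := by
        have : Real.exp (-(K*ts)) = e := rfl
        calc e * (-K) * f + e * D = Real.exp (-(K*ts)) * -K * (d ts xs 2 - m)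
              + Real.exp (-(K*ts)) * D := by rw [this, hfdef]
          _ ≤ 0 := hψle
      have hexpand : (c-K)*hstar = c*hstar - K*hstar := by ring
      have h5 : K * hstar = e * K * f := by rw [hstardef]; ring
      linarith [htrans_sum, heD, h3, h4, hexpand, h5]
    -- final contradiction
    have hterm1 : -(4*ε) ≤ e * lap (fun y => d ts y 2) xs := hlap
    have hterm2 : δ' ≤ (c - K) * hstar := by
      have h1 : c - K ≤ -1 := by linarith
      have h2 : hstar ≤ 0 := by linarith
      have h3 : (-1) * hstar ≤ (c - K) * hstar := mul_le_mul_of_nonpos_right h1 h2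
      linarith
    have hterm3 : 0 ≤ c * e * m := by positivity
    have hfin : δ' ≤ 4*ε + 4*ε*Mu*R := by linarith
    have h4ε : 4*ε ≤ 4*η := by
      have h := mul_le_of_le_one_left hη.le hη1
      have h2 : ε = η*η := sq η
      linarith
    have h4εMuR : 4*ε*Mu*R = 4*Mu*(η*Real.sqrt (2+δ')) := by
      rw [show 4*ε*Mu*R = 4*Mu*(ε*R) by ring, hεR]
    have : δ' ≤ η * B := by
      rw [hBdef]
      rw [h4εMuR] at hfin
      have hExp : η * B = 4*η + 4*Mu*(η*Real.sqrt (2+δ')) := by rw [hBdef]; ring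
      linarith
    linarith
  -- wrap up: t = 0, t interior, t = T
  intro t ht x
  rcases eq_or_lt_of_le ht.1 with h0 | h0
  · rw [← h0]; exact hinit x
  rcases lt_or_eq_of_le ht.2 with hTlt | hTeq
  · exact main t ⟨h0, hTlt⟩ x
  · -- t = T : pass to the limit
    subst hTeq
    have hcont : ContinuousWithinAt (fun s => d s x 2) (Set.Ioo 0 t) t := by
      have h1 : ContinuousOn (fun q : ℝ × E2 => d q.1 q.2 2) (Set.Icc 0 t ×ˢ Set.univ) :=
        (EuclideanSpace.proj (2 : Fin 3) : E3 →L[ℝ] ℝ).continuous.comp_continuousOn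
          hd_smooth.continuousOn
      have h2 : ContinuousOn (fun s : ℝ => d s x 2) (Set.Icc 0 t) := by
        apply h1.comp (continuous_id.prodMk continuous_const).continuousOn
        intro s hs
        exact ⟨hs, Set.mem_univ x⟩
      exact (h2 t ht).mono Set.Ioo_subset_Icc_self
    haveI hne : (𝓝[Set.Ioo (0:ℝ) t] t).NeBot := by
      apply mem_closure_iff_nhdsWithin_neBot.mp
      rw [closure_Ioo (ne_of_lt h0)]
      exact ⟨h0.le, le_refl t⟩
    apply ge_of_tendsto hcont
    filter_upwards [self_mem_nhdsWithin] with s hs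
    exact main s hs x
end
end
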